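/- Let Z be a set, l a positive integer, and m any nonnegative integer. For strings of length l over Z with d(s, s') = Σ_{i=1}^{l} 2^{l-i} · 𝟙[s^{(i)} ≠ s'^{(i)}], the relation R_m defined by R_m(s, s') ⟺ d(s, s') < 2^{m} is an equivalence relation; in particular it is transitive: if d(s, s') < 2^{m} and d(s', s'') < 2^{m}, then d(s, s'') < 2^{m}. -/

import Mathlib

/-- Weighted Hamming distance `d(s,s') = ∑_{i=1}^{l} 2^{l-i} · 𝟙[s⁽ⁱ⁾ ≠ s'⁽ⁱ⁾]` on
strings of length `l` over `Z`, encoded as functions `Fin l → Z` (index `i : Fin l`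
corresponds to the 1-indexed position `i + 1`). -/
def whamDist {Z : Type*} [DecidableEq Z] {l : ℕ} (s s' : Fin l → Z) : ℕ :=
  ∑ i : Fin l, 2 ^ (l - ((i : ℕ) + 1)) * (if s i ≠ s' i then 1 else 0)

lemma sum_range_two_pow (n : ℕ) : ∑ k ∈ Finset.range n, 2 ^ k = 2 ^ n - 1 := by
  induction n with
  | zero => simp
  | succ n ih =>
    rw [Finset.sum_range_succ, ih]
    have : 0 < 2 ^ n := Nat.pow_pos (by norm_num)
    rw [pow_succ]
    omega

lemma whamDist_lt_iff {Z : Type*} [DecidableEq Z] {l m : ℕ} (s s' : Fin l → Z) :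
    whamDist s s' < 2 ^ m ↔ ∀ i : Fin l, (i : ℕ) + 1 + m ≤ l → s i = s' i := by
  constructor
  · intro h i hi
    by_contra hne
    have h1 : 2 ^ (l - ((i : ℕ) + 1)) * (if s i ≠ s' i then 1 else 0) ≤ whamDist s s' := by
      rw [whamDist]
      exact Finset.single_le_sum (f := fun j : Fin l =>
        2 ^ (l - ((j : ℕ) + 1)) * (if s j ≠ s' j then 1 else 0))
        (fun j _ => Nat.zero_le _) (Finset.mem_univ i)
    rw [if_pos hne, mul_one] at h1
    have h2 : 2 ^ m ≤ 2 ^ (l - ((i : ℕ) + 1)) :=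
      Nat.pow_le_pow_right (by norm_num) (by omega)
    omega
  · intro h
    have hb : whamDist s s' ≤
        ∑ i ∈ Finset.univ.filter (fun i : Fin l => s i ≠ s' i), 2 ^ (l - ((i : ℕ) + 1)) := by
      rw [whamDist,
        ← Finset.sum_filter_add_sum_filter_not Finset.univ (fun i : Fin l => s i ≠ s' i)]
      have hz : ∑ i ∈ Finset.univ.filter (fun i : Fin l => ¬ s i ≠ s' i),
          2 ^ (l - ((i : ℕ) + 1)) * (if s i ≠ s' i then 1 else 0) = 0 := by
        apply Finset.sum_eq_zero
        intro i hi
        simp only [Finset.mem_filter] at hi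
        simp [hi.2]
      rw [hz, add_zero]
      apply Finset.sum_le_sum
      intro i hi
      simp only [Finset.mem_filter] at hi
      simp [hi.2]
    have himg : ∑ i ∈ Finset.univ.filter (fun i : Fin l => s i ≠ s' i), 2 ^ (l - ((i : ℕ) + 1))
        = ∑ k ∈ (Finset.univ.filter (fun i : Fin l => s i ≠ s' i)).image
            (fun i : Fin l => l - ((i : ℕ) + 1)), 2 ^ k := by
      rw [Finset.sum_image]
      intro a _ b _ hab
      have ha := a.isLt
      have hb2 := b.isLt
      have : (a : ℕ) = (b : ℕ) := by beta_reduce at hab; omega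
      exact Fin.ext this
    have hsub : (Finset.univ.filter (fun i : Fin l => s i ≠ s' i)).image
        (fun i : Fin l => l - ((i : ℕ) + 1)) ⊆ Finset.range m := by
      intro k hk
      simp only [Finset.mem_image, Finset.mem_filter, Finset.mem_univ, true_and] at hk
      obtain ⟨i, hne, rfl⟩ := hk
      rw [Finset.mem_range]
      have := i.isLt
      by_contra hge
      push_neg at hge
      exact hne (h i (by omega))
    calc whamDist s s' ≤ _ := hb
      _ = _ := himg
      _ ≤ ∑ k ∈ Finset.range m, 2 ^ k := Finset.sum_le_sum_of_subset hsub
      _ < 2 ^ m := by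
        rw [sum_range_two_pow]
        have : 0 < 2 ^ m := Nat.pow_pos (by norm_num)
        omega

/-- For every `m`, the relation `R_m(s, s') ⟺ d(s, s') < 2^m` is an equivalence
relation; in particular it is transitive. -/
theorem whamDist_ball_equivalence {Z : Type*} [DecidableEq Z] {l : ℕ}
    (hl : 0 < l) (m : ℕ) :
    Equivalence (fun s s' : Fin l → Z => whamDist s s' < 2 ^ m) ∧
    (∀ s s' s'' : Fin l → Z,
      whamDist s s' < 2 ^ m → whamDist s' s'' < 2 ^ m → whamDist s s'' < 2 ^ m) := by
  have htrans : ∀ s s' s'' : Fin l → Z,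
      whamDist s s' < 2 ^ m → whamDist s' s'' < 2 ^ m → whamDist s s'' < 2 ^ m := by
    intro s s' s'' h1 h2
    rw [whamDist_lt_iff] at h1 h2 ⊢
    intro i hi
    exact (h1 i hi).trans (h2 i hi)
  refine ⟨⟨?_, ?_, ?_⟩, htrans⟩
  · intro s
    have : whamDist s s = 0 := by simp [whamDist]
    rw [this]
    exact Nat.pow_pos (by norm_num)
  · intro s s' h
    have : whamDist s' s = whamDist s s' := by
      unfold whamDist
      apply Finset.sum_congr rfl
      intro i _
      rcases eq_or_ne (s i) (s' i) with h' | h'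
      · rw [if_neg (by simp [h']), if_neg (by simp [h'])]
      · rw [if_pos h'.symm, if_pos h']
    rwa [this]
  · intro s s' s''
    exact htrans s s' s''
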